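/- arXiv:0810.1344 — 5 statements merged into one kernel-verified Lean document; each statement's English description precedes it below -/
import Mathlib

section
/- The number of 01-words of length n in which no initial segment contains more 0's than 1's equals the central binomial coefficient C(n, ⌊n/2⌋). -/
/-!
Let `B n h` be the number of words of length `n` in which every prefix has at most `h` more 0's
than 1's. Splitting off the first letter gives `B (n + 1) 0 = B n 1` and
`B (n + 1) (h + 1) = B n h + B n (h + 2)`. The reflection principle predicts that `B n h` counts
the words whose final excess of 0's over 1's lies in `[-h - 1, h]`; that binomial window sum
obeys the same recursion by Pascal's rule, so the two agree. For `h = 0` the window consists of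
the words with `n / 2` zeros.
-/

open Finset

theorem Nat.sum_range_succ_choose_smul {M : Type*} [AddCommMonoid M] (n : ℕ) (f : ℕ → M) :
    ∑ j ∈ range (n + 2), (n + 1).choose j • f j =
      ∑ j ∈ range (n + 1), n.choose j • (f j + f (j + 1)) := by
  have shifted : ∑ j ∈ range (n + 1), n.choose (j + 1) • f (j + 1) + f 0 =
      ∑ j ∈ range (n + 1), n.choose j • f j := by
    rw [sum_range_succ, sum_range_succ' _ n, Nat.choose_succ_self, zero_smul, add_zero,
      Nat.choose_zero_right, one_smul]
  rw [sum_range_succ', Nat.choose_zero_right, one_smul]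
  simp only [Nat.choose_succ_succ, add_smul, smul_add, sum_add_distrib]
  rw [add_assoc, shifted, add_comm]

theorem Fin.card_filter_univ_cons {α : Type*} [Fintype α] {n : ℕ}
    (P : (Fin (n + 1) → α) → Prop) [DecidablePred P] :
    #{w | P w} = ∑ a : α, #{v : Fin n → α | P (Fin.cons a v)} := by
  simp only [card_filter]
  rw [← (Fin.consEquiv fun _ => α).sum_comp, Fintype.sum_prod_type]
  rfl

section Window

/-- With `j` the number of 0's of a word of length `n`, its final excess is `2 * j - n`; this is
the indicator of that excess lying in `[-h - 1, h]`. -/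
def window (n h j : ℕ) : ℕ := if n ≤ 2 * j + h + 1 ∧ 2 * j ≤ n + h then 1 else 0

lemma window_succ_zero_add (n j : ℕ) :
    window (n + 1) 0 j + window (n + 1) 0 (j + 1) = window n 1 j := by
  unfold window; split_ifs <;> omega

lemma window_succ_succ_add (n h j : ℕ) :
    window (n + 1) (h + 1) j + window (n + 1) (h + 1) (j + 1) =
      window n h j + window n (h + 2) j := by
  unfold window; split_ifs <;> omega

def windowSum (n h : ℕ) : ℕ := ∑ j ∈ range (n + 1), n.choose j * window n h j

lemma windowSum_zero (h : ℕ) : windowSum 0 h = 1 := by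
  simp [windowSum, window]

lemma windowSum_succ (n h : ℕ) :
    windowSum (n + 1) h =
      ∑ j ∈ range (n + 1), n.choose j * (window (n + 1) h j + window (n + 1) h (j + 1)) :=
  Nat.sum_range_succ_choose_smul n _

lemma windowSum_succ_zero (n : ℕ) : windowSum (n + 1) 0 = windowSum n 1 := by
  rw [windowSum_succ]
  simp only [window_succ_zero_add, windowSum]

lemma windowSum_succ_succ (n h : ℕ) :
    windowSum (n + 1) (h + 1) = windowSum n h + windowSum n (h + 2) := by
  rw [windowSum_succ]
  simp only [window_succ_succ_add, mul_add, sum_add_distrib, windowSum]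

lemma windowSum_zero_right (n : ℕ) : windowSum n 0 = n.choose (n / 2) := by
  rw [windowSum, sum_eq_single (n / 2)]
  · rw [window, if_pos (by omega), mul_one]
  · intro j _ hj
    rw [window, if_neg (by omega), mul_zero]
  · exact fun hj => absurd (mem_range.2 (by omega)) hj

end Window

section BoundedWords

variable {n : ℕ}

def prefixCount (w : Fin n → Fin 2) (m : ℕ) (b : Fin 2) : ℕ :=
  #{i | i.val < m ∧ w i = b}

@[simp]
lemma prefixCount_zero (w : Fin n → Fin 2) (b : Fin 2) : prefixCount w 0 b = 0 := by
  simp [prefixCount]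

lemma prefixCount_cons_succ (a : Fin 2) (v : Fin n → Fin 2) (m : ℕ) (b : Fin 2) :
    prefixCount (Fin.cons a v) (m + 1) b = (if a = b then 1 else 0) + prefixCount v m b := by
  rw [prefixCount, prefixCount, card_filter, card_filter, Fin.sum_univ_succ]
  simp

def boundedWords (n h : ℕ) : Finset (Fin n → Fin 2) :=
  {w | ∀ m ≤ n, prefixCount w m 0 ≤ prefixCount w m 1 + h}

lemma cons_mem_boundedWords_iff {h : ℕ} (a : Fin 2) (v : Fin n → Fin 2) :
    Fin.cons a v ∈ boundedWords (n + 1) h ↔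
      ∀ m ≤ n, (if a = 0 then 1 else 0) + prefixCount v m 0 ≤
        (if a = 1 then 1 else 0) + prefixCount v m 1 + h := by
  simp only [boundedWords, mem_filter, mem_univ, true_and]
  constructor
  · intro hw m hm
    simpa [prefixCount_cons_succ, add_assoc] using hw (m + 1) (by omega)
  · rintro hv (_ | m) hm
    · simp
    · simpa [prefixCount_cons_succ, add_assoc] using hv m (by omega)

lemma cons_zero_not_mem_boundedWords_zero (v : Fin n → Fin 2) :
    Fin.cons 0 v ∉ boundedWords (n + 1) 0 := by
  rw [cons_mem_boundedWords_iff]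
  intro hv
  simpa using hv 0 (Nat.zero_le n)

lemma cons_zero_mem_boundedWords_succ_iff {h : ℕ} (v : Fin n → Fin 2) :
    Fin.cons 0 v ∈ boundedWords (n + 1) (h + 1) ↔ v ∈ boundedWords n h := by
  rw [cons_mem_boundedWords_iff, boundedWords, mem_filter]
  simp only [mem_univ, true_and]
  exact forall₂_congr fun m _ => by simp only [↓reduceIte, Fin.isValue, zero_ne_one, zero_add]; omega

lemma cons_one_mem_boundedWords_iff {h : ℕ} (v : Fin n → Fin 2) :
    Fin.cons 1 v ∈ boundedWords (n + 1) h ↔ v ∈ boundedWords n (h + 1) := by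
  rw [cons_mem_boundedWords_iff, boundedWords, mem_filter]
  simp only [mem_univ, true_and]
  exact forall₂_congr fun m _ => by simp only [↓reduceIte, Fin.isValue, one_ne_zero, zero_add]; omega

end BoundedWords

lemma card_boundedWords_zero (h : ℕ) : #(boundedWords 0 h) = 1 := by
  rw [boundedWords, filter_true_of_mem fun w _ m hm => by simp [Nat.le_zero.mp hm]]
  rfl

lemma card_boundedWords_succ (n h : ℕ) :
    #(boundedWords (n + 1) h) =
      #{v : Fin n → Fin 2 | Fin.cons 0 v ∈ boundedWords (n + 1) h} +
        #(boundedWords n (h + 1)) := by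
  rw [← filter_univ_mem (boundedWords (n + 1) h), Fin.card_filter_univ_cons, Fin.sum_univ_two]
  simp only [cons_one_mem_boundedWords_iff, filter_univ_mem]

lemma card_boundedWords_succ_zero (n : ℕ) : #(boundedWords (n + 1) 0) = #(boundedWords n 1) := by
  rw [card_boundedWords_succ, filter_false_of_mem fun v _ => cons_zero_not_mem_boundedWords_zero v,
    card_empty, zero_add]

lemma card_boundedWords_succ_succ (n h : ℕ) :
    #(boundedWords (n + 1) (h + 1)) = #(boundedWords n h) + #(boundedWords n (h + 2)) := by
  rw [card_boundedWords_succ]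
  simp only [cons_zero_mem_boundedWords_succ_iff, filter_univ_mem]

theorem card_boundedWords (n h : ℕ) : #(boundedWords n h) = windowSum n h := by
  induction n generalizing h with
  | zero => rw [card_boundedWords_zero, windowSum_zero]
  | succ n ih =>
    cases h with
    | zero => rw [card_boundedWords_succ_zero, windowSum_succ_zero, ih]
    | succ h => rw [card_boundedWords_succ_succ, windowSum_succ_succ, ih, ih]

theorem stmt2 (n : ℕ) :
    (Finset.univ.filter (fun w : Fin n → Fin 2 =>
        ∀ m ≤ n, ((Finset.univ.filter (fun i : Fin n => i.val < m ∧ w i = 0)).card ≤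
          (Finset.univ.filter (fun i : Fin n => i.val < m ∧ w i = 1)).card))).card =
      n.choose (n / 2) :=
  (card_boundedWords n 0).trans (windowSum_zero_right n)
end

section
/- The number of palindromic vacillating tableaux of length 2n with all partitions having at most one row (height bounded by 1) equals C(n, ⌊n/2⌋). -/
/-
A palindromic tableau is determined by its first half `ν⁰, …, νⁿ`, and every admissible
half extends by reflection: read backwards, a step deleting a square becomes a step adding
one and its index changes parity, so the mirrored steps are admissible again. Among the
admissible halves of length `n`, those with `νⁿ ≥ h` number `C(n, h + ⌈n/2⌉)`: extending by
one step either keeps `νⁿ` or moves it by one, which turns this count into Pascal's rule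
(at `h = 0` after an odd step, the symmetry `C(2m+1, m) = C(2m+1, m+1)`). Taking `h = 0`
gives `C(n, ⌈n/2⌉) = C(n, ⌊n/2⌋)`.
-/

/-- A palindromic vacillating tableau of length `2n` with height bounded by 1,
encoded as a sequence of one-row partition sizes `ν 0, ..., ν (2n)`. -/
def IsPalVacTab (n : ℕ) (ν : Fin (2 * n + 1) → ℕ) : Prop :=
  ν ⟨0, by omega⟩ = 0 ∧ ν ⟨2 * n, by omega⟩ = 0 ∧
  (∀ j : ℕ, (h : j < 2 * n) →
    if Even j then
      -- step to an odd index: do nothing or delete a square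
      ν ⟨j + 1, by omega⟩ = ν ⟨j, by omega⟩ ∨ ν ⟨j + 1, by omega⟩ + 1 = ν ⟨j, by omega⟩
    else
      -- step to an even index: do nothing or add a square
      ν ⟨j + 1, by omega⟩ = ν ⟨j, by omega⟩ ∨ ν ⟨j + 1, by omega⟩ = ν ⟨j, by omega⟩ + 1) ∧
  (∀ j : ℕ, (h : j ≤ 2 * n) → ν ⟨j, by omega⟩ = ν ⟨2 * n - j, by omega⟩)

namespace PalVacTab

open Function Set

theorem choose_succ_add_half (n h : ℕ) :
    (n + 1).choose (h + (n + 1 + 1) / 2) =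
      n.choose (h + (n + 1) / 2) + n.choose ((if Even n then h + 1 else h - 1) + (n + 1) / 2) := by
  rcases Nat.even_or_odd' n with ⟨m, rfl | rfl⟩
  · rw [if_pos (even_two_mul m), show (2 * m + 1 + 1) / 2 = m + 1 by omega,
      show (2 * m + 1) / 2 = m by omega, ← add_assoc, Nat.choose_succ_succ', add_right_comm]
  · rw [if_neg (Nat.not_even_iff_odd.2 (odd_two_mul_add_one m)),
      show (2 * m + 1 + 1 + 1) / 2 = m + 1 by omega, show (2 * m + 1 + 1) / 2 = m + 1 by omega]
    cases h with
    | zero =>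
      simp only [Nat.zero_sub, zero_add]
      rw [Nat.choose_succ_succ', Nat.choose_symm_half]
    | succ k =>
      rw [Nat.add_sub_cancel, show k + 1 + (m + 1) = k + m + 1 + 1 by ring,
        Nat.choose_succ_succ', show k + (m + 1) = k + m + 1 by ring, add_comm]

theorem choose_succ_div_two (n : ℕ) : n.choose ((n + 1) / 2) = n.choose (n / 2) := by
  rcases Nat.even_or_odd' n with ⟨m, rfl | rfl⟩
  · rw [show (2 * m + 1) / 2 = 2 * m / 2 by omega]
  · rw [show (2 * m + 1 + 1) / 2 = m + 1 by omega, show (2 * m + 1) / 2 = m by omega,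
      Nat.choose_symm_half]

def ValidStep (j x y : ℕ) : Prop :=
  if Even j then y = x ∨ y + 1 = x else y = x ∨ y = x + 1

theorem validStep_swap {i j x y : ℕ} (h : Even (i + j + 1)) :
    ValidStep i x y ↔ ValidStep j y x := by
  have hij : (Even i ↔ ¬Even j) := by
    rw [Nat.even_add_one, Nat.even_add, not_iff] at h; exact iff_not_comm.1 h.symm
  unfold ValidStep
  by_cases hi : Even i
  · rw [if_pos hi, if_neg (hij.1 hi)]; omega
  · rw [if_neg hi, if_pos (by tauto)]; omega

/-- First halves `ν⁰, …, νⁿ` of the tableaux, padded with zeros beyond `n`. -/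
def halfPaths (n : ℕ) : Set (ℕ → ℕ) :=
  {a | a 0 = 0 ∧ (∀ j < n, ValidStep j (a j) (a (j + 1))) ∧ ∀ j, n < j → a j = 0}

theorem halfPaths_zero : halfPaths 0 = {0} := by
  ext a
  refine ⟨fun ⟨h0, _, htail⟩ => funext fun j => ?_, ?_⟩
  · cases j with
    | zero => exact h0
    | succ j => exact htail _ j.succ_pos
  · rintro rfl
    exact ⟨rfl, fun j hj => absurd hj j.not_lt_zero, fun _ _ => rfl⟩

theorem mem_halfPaths_succ_iff {n : ℕ} {b : ℕ → ℕ} :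
    b ∈ halfPaths (n + 1) ↔
      update b (n + 1) 0 ∈ halfPaths n ∧ ValidStep n (b n) (b (n + 1)) := by
  have hb : ∀ j ≤ n, update b (n + 1) 0 j = b j := fun j hj => update_of_ne (by omega) _ _
  constructor
  · rintro ⟨h0, hstep, htail⟩
    refine ⟨⟨by rw [hb 0 n.zero_le, h0], fun j hj => ?_, fun j hj => ?_⟩, hstep n n.lt_succ_self⟩
    · rw [hb j hj.le, hb (j + 1) hj]; exact hstep j (by omega)
    · rcases eq_or_ne j (n + 1) with rfl | hne
      · exact update_self ..
      · rw [update_of_ne hne]; exact htail j (by omega)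
  · rintro ⟨⟨h0, hstep, htail⟩, hlast⟩
    refine ⟨by rwa [hb 0 n.zero_le] at h0, fun j hj => ?_, fun j hj => ?_⟩
    · rcases Nat.lt_succ_iff_lt_or_eq.1 hj with hj | rfl
      · have := hstep j hj; rwa [hb j hj.le, hb (j + 1) hj] at this
      · exact hlast
    · have := htail j (by omega); rwa [update_of_ne (by omega)] at this

def extendPath (n : ℕ) (e : ℕ → ℕ) (a : ℕ → ℕ) : ℕ → ℕ :=
  update a (n + 1) (e (a n))

theorem mem_image_extendPath_iff {n : ℕ} {e : ℕ → ℕ} {p : ℕ → Prop} {b : ℕ → ℕ} :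
    b ∈ extendPath n e '' {a ∈ halfPaths n | p (a n)} ↔
      update b (n + 1) 0 ∈ halfPaths n ∧ p (b n) ∧ b (n + 1) = e (b n) := by
  have hn : n ≠ n + 1 := n.succ_ne_self.symm
  constructor
  · rintro ⟨a, ⟨ha, hp⟩, rfl⟩
    have hrestore : update (extendPath n e a) (n + 1) 0 = a := by
      rw [extendPath, update_idem, ← ha.2.2 (n + 1) n.lt_succ_self, update_eq_self]
    have hlast : extendPath n e a n = a n := update_of_ne hn _ _
    exact ⟨by rw [hrestore]; exact ha, hlast ▸ hp, by rw [hlast]; exact update_self ..⟩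
  · rintro ⟨hb, hp, hlast⟩
    refine ⟨update b (n + 1) 0, ⟨hb, by rwa [update_of_ne hn]⟩, ?_⟩
    rw [extendPath, update_idem, update_of_ne hn, ← hlast, update_eq_self]

theorem encard_image_extendPath (n : ℕ) (e : ℕ → ℕ) (p : ℕ → Prop) :
    (extendPath n e '' {a ∈ halfPaths n | p (a n)}).encard =
      {a ∈ halfPaths n | p (a n)}.encard := by
  refine InjOn.encard_image fun a ha b hb hab => funext fun j => ?_
  rcases eq_or_ne j (n + 1) with rfl | hj
  · rw [ha.1.2.2 _ n.lt_succ_self, hb.1.2.2 _ n.lt_succ_self]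
  · simpa [extendPath, update_of_ne hj] using congrFun hab j

def halfPathsAbove (n h : ℕ) : Set (ℕ → ℕ) :=
  {a ∈ halfPaths n | h ≤ a n}

/-- Sort by the last step: it stays, or it moves (down after an even index, up after an odd
one), which shifts the threshold on `a n`. -/
theorem encard_halfPathsAbove_succ (n h : ℕ) :
    (halfPathsAbove (n + 1) h).encard =
      (halfPathsAbove n h).encard +
        (halfPathsAbove n (if Even n then h + 1 else h - 1)).encard := by
  have hsplit : halfPathsAbove (n + 1) h =
      extendPath n id '' halfPathsAbove n h ∪
        extendPath n (fun x => if Even n then x - 1 else x + 1) ''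
          halfPathsAbove n (if Even n then h + 1 else h - 1) := by
    ext b
    simp only [halfPathsAbove, mem_union, mem_image_extendPath_iff, mem_ofPred_eq,
      mem_halfPaths_succ_iff, and_assoc, ← and_or_left, ValidStep, id]
    refine and_congr_right fun _ => ?_
    split_ifs <;> omega
  rw [hsplit, encard_union_eq, halfPathsAbove, encard_image_extendPath, halfPathsAbove,
    encard_image_extendPath]
  refine disjoint_left.2 fun b h1 h2 => ?_
  rw [halfPathsAbove, mem_image_extendPath_iff] at h1 h2
  split_ifs at h2 <;> simp only [id] at h1 <;> omega

theorem encard_halfPathsAbove (n h : ℕ) :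
    (halfPathsAbove n h).encard = n.choose (h + (n + 1) / 2) := by
  induction n generalizing h with
  | zero =>
    rw [halfPathsAbove, halfPaths_zero]
    cases h <;> simp [eq_empty_iff_forall_notMem]
  | succ n ih =>
    rw [encard_halfPathsAbove_succ, ih, ih, ← Nat.cast_add, ← choose_succ_add_half]

def firstHalf (n : ℕ) (ν : Fin (2 * n + 1) → ℕ) (j : ℕ) : ℕ :=
  if hj : j ≤ n then ν ⟨j, by omega⟩ else 0

theorem firstHalf_of_le {n j : ℕ} (ν : Fin (2 * n + 1) → ℕ) (hj : j ≤ n) :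
    firstHalf n ν j = ν ⟨j, by omega⟩ :=
  dif_pos hj

def mirror (n : ℕ) (a : ℕ → ℕ) (j : Fin (2 * n + 1)) : ℕ :=
  a (min j (2 * n - j))

theorem firstHalf_mem_halfPaths {n : ℕ} {ν : Fin (2 * n + 1) → ℕ} (hν : IsPalVacTab n ν) :
    firstHalf n ν ∈ halfPaths n := by
  obtain ⟨h0, -, hstep, -⟩ := hν
  refine ⟨(firstHalf_of_le ν n.zero_le).trans h0, fun j hj => ?_, fun j hj => dif_neg (by omega)⟩
  rw [firstHalf_of_le ν hj.le, firstHalf_of_le ν hj]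
  exact hstep j (by omega)

theorem mirror_isPalVacTab {n : ℕ} {a : ℕ → ℕ} (ha : a ∈ halfPaths n) :
    IsPalVacTab n (mirror n a) := by
  obtain ⟨h0, hstep, -⟩ := ha
  refine ⟨by simpa [mirror] using h0, by simpa [mirror] using h0, fun j hj => ?_, fun j hj => ?_⟩
  · change ValidStep j (a (min j (2 * n - j))) (a (min (j + 1) (2 * n - (j + 1))))
    rcases lt_or_ge j n with hjn | hjn
    · rw [min_eq_left (by omega), min_eq_left (by omega)]
      exact hstep j hjn
    · rw [min_eq_right (by omega), min_eq_right (by omega),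
        show 2 * n - j = 2 * n - (j + 1) + 1 by omega]
      exact (validStep_swap ⟨n, by omega⟩).1 (hstep _ (by omega))
  · change a (min j (2 * n - j)) = a (min (2 * n - j) (2 * n - (2 * n - j)))
    congr 1
    omega

theorem firstHalf_mirror {n : ℕ} {a : ℕ → ℕ} (ha : a ∈ halfPaths n) :
    firstHalf n (mirror n a) = a := by
  funext j
  by_cases hj : j ≤ n
  · rw [firstHalf_of_le _ hj, mirror, min_eq_left (by simp only; omega)]
  · exact (dif_neg hj).trans (ha.2.2 j (by omega)).symm

theorem mirror_firstHalf {n : ℕ} {ν : Fin (2 * n + 1) → ℕ} (hν : IsPalVacTab n ν) :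
    mirror n (firstHalf n ν) = ν := by
  funext ⟨j, hj⟩
  rw [mirror, firstHalf_of_le ν (by simp only; omega)]
  rcases le_total j n with hjn | hjn
  · simp only [min_eq_left (show j ≤ 2 * n - j by omega)]
  · simp only [min_eq_right (show 2 * n - j ≤ j by omega)]
    exact (hν.2.2.2 j (by omega)).symm

theorem encard_palVacTab (n : ℕ) :
    {ν | IsPalVacTab n ν}.encard = (halfPaths n).encard := by
  have hbij : BijOn (firstHalf n) {ν | IsPalVacTab n ν} (halfPaths n) :=
    InvOn.bijOn ⟨fun _ hν => mirror_firstHalf hν, fun _ ha => firstHalf_mirror ha⟩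
      (fun _ hν => firstHalf_mem_halfPaths hν) (fun _ ha => mirror_isPalVacTab ha)
  rw [← hbij.image_eq, hbij.injOn.encard_image]

end PalVacTab

theorem stmt4 (n : ℕ) :
    {ν : Fin (2 * n + 1) → ℕ | IsPalVacTab n ν}.ncard = n.choose (n / 2) := by
  have hall : PalVacTab.halfPaths n = PalVacTab.halfPathsAbove n 0 := by
    simp [PalVacTab.halfPathsAbove]
  rw [Set.ncard_def, PalVacTab.encard_palVacTab, hall, PalVacTab.encard_halfPathsAbove,
    ENat.toNat_natCast, zero_add, PalVacTab.choose_succ_div_two]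
end

section
/- For lattice points a, b in the Weyl chamber W_2 and any n ≥ 0, the number of W_2-vacillating lattice walks of length 2n from a to b equals the number of W_2-vacillating lattice walks of length 2n from b to a. -/
/-- The Weyl chamber `W₂ = {(a₁,a₂) ∈ ℤ² : a₁ > a₂ ≥ 0}`. -/
def W2 : Set (ℤ × ℤ) := {p | p.1 > p.2 ∧ p.2 ≥ 0}

/-- Allowed step from position `j` to `j+1` of a vacillating lattice walk:
odd-indexed steps (from even `j`) stay or subtract a unit vector,
even-indexed steps (from odd `j`) stay or add a unit vector. -/
def VacStep (j : ℕ) (p q : ℤ × ℤ) : Prop :=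
  if Even j then q = p ∨ q = p - (1, 0) ∨ q = p - (0, 1)
  else q = p ∨ q = p + (1, 0) ∨ q = p + (0, 1)

/-- The set of `W₂`-vacillating lattice walks of length `m` from `a` to `b`. -/
def VacWalks (a b : ℤ × ℤ) (m : ℕ) : Set (Fin (m + 1) → ℤ × ℤ) :=
  {p | p ⟨0, by omega⟩ = a ∧ p ⟨m, by omega⟩ = b ∧ (∀ j, p j ∈ W2) ∧
    ∀ j : ℕ, (h : j < m) → VacStep j (p ⟨j, by omega⟩) (p ⟨j + 1, by omega⟩)}

/-- `w₂(a,b,m)`: the number of `W₂`-vacillating lattice walks of length `m`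
from `a` to `b`. -/
noncomputable def w2 (a b : ℤ × ℤ) (m : ℕ) : ℕ := (VacWalks a b m).ncard

lemma VacStep_symm {j k : ℕ} (hp : (Even j ↔ ¬ Even k)) {x y : ℤ × ℤ}
    (h : VacStep k x y) : VacStep j y x := by
  unfold VacStep at *
  by_cases hk : Even k
  · have hj : ¬ Even j := by tauto
    simp only [if_pos hk] at h
    simp only [if_neg hj]
    rcases h with rfl | rfl | rfl
    · left; rfl
    · right; left; simp
    · right; right; simp
  · have hj : Even j := by tauto
    simp only [if_neg hk] at h
    simp only [if_pos hj]
    rcases h with rfl | rfl | rfl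
    · left; rfl
    · right; left; simp
    · right; right; simp

lemma rev_mem {m : ℕ} (hm : Even m) {a b : ℤ × ℤ} {p : Fin (m + 1) → ℤ × ℤ}
    (hp : p ∈ VacWalks a b m) : (fun i => p i.rev) ∈ VacWalks b a m := by
  obtain ⟨h0, hlast, hW, hstep⟩ := hp
  refine ⟨?_, ?_, fun j => hW _, ?_⟩
  · show p (Fin.rev ⟨0, _⟩) = b
    have : Fin.rev (⟨0, by omega⟩ : Fin (m + 1)) = ⟨m, by omega⟩ := by
      apply Fin.ext; simp [Fin.val_rev]
    rw [this]; exact hlast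
  · show p (Fin.rev ⟨m, _⟩) = a
    have : Fin.rev (⟨m, by omega⟩ : Fin (m + 1)) = ⟨0, by omega⟩ := by
      apply Fin.ext; simp [Fin.val_rev]
    rw [this]; exact h0
  · intro j hj
    have hk : m - j - 1 < m := by omega
    have h1 : Fin.rev (⟨j, by omega⟩ : Fin (m + 1)) = ⟨(m - j - 1) + 1, by omega⟩ := by
      apply Fin.ext; simp [Fin.val_rev]; omega
    have h2 : Fin.rev (⟨j + 1, by omega⟩ : Fin (m + 1)) = ⟨m - j - 1, by omega⟩ := by
      apply Fin.ext; simp [Fin.val_rev]; omega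
    show VacStep j (p (Fin.rev ⟨j, _⟩)) (p (Fin.rev ⟨j + 1, _⟩))
    rw [h1, h2]
    refine VacStep_symm ?_ (hstep (m - j - 1) hk)
    obtain ⟨t, rfl⟩ := hm
    simp only [Nat.even_iff, Nat.not_even_iff]
    omega

theorem stmt6 (a b : ℤ × ℤ) (ha : a ∈ W2) (hb : b ∈ W2) (n : ℕ) :
    w2 a b (2 * n) = w2 b a (2 * n) := by
  have hm : Even (2 * n) := even_two_mul n
  have hinj : Function.Injective
      (fun (p : Fin (2 * n + 1) → ℤ × ℤ) => (fun i : Fin (2 * n + 1) => p i.rev)) := by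
    intro p q h
    funext i
    have := congrFun h i.rev
    simpa using this
  have himg : (fun (p : Fin (2 * n + 1) → ℤ × ℤ) => (fun i : Fin (2 * n + 1) => p i.rev)) ''
      VacWalks a b (2 * n) = VacWalks b a (2 * n) := by
    apply Set.Subset.antisymm
    · rintro _ ⟨p, hp, rfl⟩
      exact rev_mem hm hp
    · intro q hq
      refine ⟨fun i => q i.rev, rev_mem hm hq, ?_⟩
      funext i; simp
  unfold w2
  rw [← himg, Set.ncard_image_of_injective _ hinj]
end

section
/- With Δ(x,t) = sqrt((1 − (1 + x + x^{-1})t)² − 4t) the formal power series in t with Δ(x,0) = 1, the constant term in x of ((1−x)/(1+x))·Δ(x,t) equals 1 − t. -/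
/-!
The coefficients of `Δ` in `t` are Laurent polynomials in `x`: over `ℚ[T;T⁻¹]` the series
`(1 - (1 + T + T⁻¹)t)² - 4t` has a square root with constant term `1` (the binomial series),
and such a square root is unique and compatible with ring homomorphisms. For the same reason
these coefficients are invariant under `x ↦ x⁻¹`, and evaluating them at `x = -1` gives the
square root `1 - t` of `(1 + t)² - 4t`.

The coefficients `gₖ` of `g = (1 - x)/(1 + x) = 1 - 2x + 2x² - ⋯` satisfy `g₋ₖ + gₖ = 2(-1)ᵏ`
for every `k ∈ ℤ`. Hence for a Laurent polynomial `p` with `p(x⁻¹) = p(x)`,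
`2 CT(g p) = CT(g p(x)) + CT(g p(x⁻¹)) = 2 p(-1)`.
-/

open PowerSeries

/-- The Laurent series `x` in `ℚ((x))`. -/
noncomputable def xL : LaurentSeries ℚ := HahnSeries.single 1 1

/-- `Δ(x,t)` is the unique power series in `t` with coefficients in `ℚ((x))` such
that `Δ(x,0) = 1` and `Δ² = (1 − (1 + x + x⁻¹)t)² − 4t`. -/
def IsDelta (Δ : PowerSeries (LaurentSeries ℚ)) : Prop :=
  constantCoeff (R := LaurentSeries ℚ) Δ = 1 ∧
  Δ ^ 2 = (1 - C (R := LaurentSeries ℚ) (1 + xL + xL⁻¹) * X) ^ 2 - 4 * X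

namespace PowerSeries

variable {R A : Type*} [CommRing R] [CommRing A]

theorem eq_of_sq_eq_sq_of_constantCoeff_eq_one (h2 : IsUnit (2 : A)) {P Q : A⟦X⟧}
    (hP : constantCoeff P = 1) (hQ : constantCoeff Q = 1) (h : P ^ 2 = Q ^ 2) : P = Q := by
  have hunit : IsUnit (P + Q) := by
    rwa [isUnit_iff_constantCoeff, map_add, hP, hQ, one_add_one_eq_two]
  have hprod : (P - Q) * (P + Q) = 0 := by linear_combination h
  exact sub_eq_zero.1 (hunit.mul_left_eq_zero.1 hprod)

theorem map_eq_of_sq_eq_map_sq (φ : R →+* A) (h2 : IsUnit (2 : A)) {D : R⟦X⟧} {E : A⟦X⟧}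
    (hD : constantCoeff D = 1) (hE : constantCoeff E = 1) (h : E ^ 2 = map φ (D ^ 2)) :
    map φ D = E :=
  eq_of_sq_eq_sq_of_constantCoeff_eq_one h2
    (by rw [← coeff_zero_eq_constantCoeff_apply, coeff_map, coeff_zero_eq_constantCoeff_apply, hD,
      map_one]) hE (by rw [← map_pow, h])

theorem exists_sq_eq_of_constantCoeff_eq_one [Algebra ℚ A] {f : A⟦X⟧}
    (hf : constantCoeff f = 1) : ∃ g : A⟦X⟧, constantCoeff g = 1 ∧ g ^ 2 = f := by
  have hf1 : constantCoeff (f - 1) = 0 := by simp [hf]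
  have hs : HasSubst (f - 1) := HasSubst.of_constantCoeff_zero' hf1
  have h1 : (1 : A⟦X⟧).subst (f - 1) = (1 : A⟦X⟧) := by
    rw [← coe_substAlgHom hs, map_one]
  set B := binomialSeries A (2⁻¹ : ℚ)
  refine ⟨B.subst (f - 1), ?_, ?_⟩
  · have := constantCoeff_subst_eq_zero hf1 (B - 1) (by simp [B])
    rwa [subst_sub hs, h1, map_sub, sub_eq_zero] at this
  · have hB : B ^ 2 = 1 + X := by
      rw [sq, ← binomialSeries_add, show (2⁻¹ + 2⁻¹ : ℚ) = (1 : ℕ) by norm_num,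
        binomialSeries_nat, pow_one]
    rw [← subst_pow hs, hB, subst_add hs, subst_X hs, h1, add_sub_cancel]

noncomputable def deltaSq (c : R) : R⟦X⟧ := (1 - C c * X) ^ 2 - 4 * X

@[simp]
theorem constantCoeff_deltaSq (c : R) : constantCoeff (deltaSq c) = 1 := by
  simp [deltaSq]

theorem map_deltaSq (φ : R →+* A) (c : R) : map φ (deltaSq c) = deltaSq (φ c) := by
  simp only [deltaSq, map_sub, map_pow, map_mul, map_one, map_C, map_X, map_ofNat]

end PowerSeries

theorem isUnit_two_of_algebra_rat (A : Type*) [Ring A] [Algebra ℚ A] : IsUnit (2 : A) := by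
  simpa only [map_ofNat] using
    (isUnit_iff_ne_zero.2 (two_ne_zero : (2 : ℚ) ≠ 0)).map (algebraMap ℚ A)

open scoped LaurentPolynomial
open LaurentPolynomial (T invert eval₂ eval₂_T eval₂_C_mul_T)

noncomputable def xUnit : (LaurentSeries ℚ)ˣ where
  val := xL
  inv := HahnSeries.single (-1) 1
  val_inv := by
    rw [xL, HahnSeries.single_mul_single, add_neg_cancel, mul_one, HahnSeries.single_zero_one]
  inv_val := by
    rw [xL, HahnSeries.single_mul_single, neg_add_cancel, mul_one, HahnSeries.single_zero_one]

theorem val_xUnit_zpow (k : ℤ) :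
    ((xUnit ^ k : (LaurentSeries ℚ)ˣ) : LaurentSeries ℚ) = HahnSeries.single k 1 := by
  induction k using Int.induction_on with
  | zero => rw [zpow_zero, Units.val_one, HahnSeries.single_zero_one]
  | succ k ih =>
    rw [zpow_add_one, Units.val_mul, ih]
    exact HahnSeries.single_mul_single.trans (by rw [mul_one])
  | pred k ih =>
    rw [zpow_sub_one, Units.val_mul, ih]
    exact HahnSeries.single_mul_single.trans (by rw [mul_one, sub_eq_add_neg])

noncomputable abbrev toLaurentSeries : ℚ[T;T⁻¹] →+* LaurentSeries ℚ := eval₂ HahnSeries.C xUnit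

noncomputable abbrev evalNegOne : ℚ[T;T⁻¹] →+* ℚ := eval₂ (RingHom.id ℚ) (-1)

theorem toLaurentSeries_C_mul_T (c : ℚ) (k : ℤ) :
    toLaurentSeries (LaurentPolynomial.C c * T k) = HahnSeries.single k c := by
  rw [eval₂_C_mul_T, val_xUnit_zpow, HahnSeries.C_apply, HahnSeries.single_mul_single, zero_add,
    mul_one]

theorem evalNegOne_C_mul_T (c : ℚ) (k : ℤ) :
    evalNegOne (LaurentPolynomial.C c * T k) = c * (-1) ^ k := by
  rw [eval₂_C_mul_T, Units.val_zpow_eq_zpow_val, Units.val_neg, Units.val_one, RingHom.id_apply]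

theorem toLaurentSeries_trinomial : toLaurentSeries (1 + T 1 + T (-1)) = 1 + xL + xL⁻¹ := by
  rw [map_add, map_add, map_one, eval₂_T, eval₂_T, zpow_one, zpow_neg_one,
    Units.val_inv_eq_inv_val]
  rfl

theorem evalNegOne_trinomial : evalNegOne (1 + T 1 + T (-1)) = -1 := by
  rw [map_add, map_add, map_one, eval₂_T, eval₂_T]
  norm_num

theorem invert_trinomial : invert (1 + T 1 + T (-1) : ℚ[T;T⁻¹]) = 1 + T 1 + T (-1) := by
  simp only [map_add, map_one, LaurentPolynomial.invert_T, neg_neg]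
  ring

theorem one_add_X_mul_mk :
    (1 + X) * mk (fun n => if n = 0 then 1 else 2 * (-1 : ℚ) ^ n) = 1 - X := by
  ext n
  rcases n with _ | _ | n <;>
    norm_num [add_mul, coeff_one, coeff_X, coeff_succ_X_mul, pow_succ]

theorem one_sub_xL_div_one_add_xL : (1 - xL) / (1 + xL) =
    ((mk fun n => if n = 0 then 1 else 2 * (-1 : ℚ) ^ n : ℚ⟦X⟧) : LaurentSeries ℚ) := by
  have hx : ((X : ℚ⟦X⟧) : LaurentSeries ℚ) = xL := coe_X
  have hne : (1 + xL : LaurentSeries ℚ) ≠ 0 := by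
    intro h
    simpa [xL] using congrArg (HahnSeries.coeff · 0) h
  rw [div_eq_iff hne, mul_comm, ← hx, ← coe_one, ← coe_add, ← coe_mul, one_add_X_mul_mk, coe_sub]

theorem coeff_neg_add_coeff_one_sub_xL_div_one_add_xL (k : ℤ) :
    ((1 - xL) / (1 + xL)).coeff (-k) + ((1 - xL) / (1 + xL)).coeff k = 2 * (-1 : ℚ) ^ k := by
  have hnat (n : ℕ) :
      ((1 - xL) / (1 + xL)).coeff (-n) + ((1 - xL) / (1 + xL)).coeff n = 2 * (-1 : ℚ) ^ n := by
    rw [one_sub_xL_div_one_add_xL, coeff_coe, coeff_coe]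
    rcases n with _ | n
    · norm_num
    · rw [if_pos (by omega), if_neg (by omega), Int.natAbs_natCast, coeff_mk,
        if_neg n.succ_ne_zero, zero_add]
  obtain ⟨n, rfl | rfl⟩ := Int.eq_nat_or_neg k
  · exact_mod_cast hnat n
  · rw [neg_neg, add_comm, zpow_neg, zpow_natCast, hnat, ← inv_pow, inv_neg, inv_one]

theorem coeff_zero_mul_add_coeff_zero_mul_invert (p : ℚ[T;T⁻¹]) :
    ((1 - xL) / (1 + xL) * toLaurentSeries p).coeff 0
      + ((1 - xL) / (1 + xL) * toLaurentSeries (invert p)).coeff 0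
      = evalNegOne p + evalNegOne (invert p) := by
  induction p using LaurentPolynomial.induction_on' with
  | add p q hp hq =>
    simp only [map_add, mul_add, HahnSeries.coeff_add]
    linarith
  | C_mul_T k c =>
    have hco (j : ℤ) :
        ((1 - xL) / (1 + xL) * toLaurentSeries (LaurentPolynomial.C c * T j)).coeff 0
          = ((1 - xL) / (1 + xL)).coeff (-j) * c := by
      rw [toLaurentSeries_C_mul_T, ← HahnSeries.coeff_mul_single_add, neg_add_cancel]
    rw [map_mul invert, LaurentPolynomial.invert_C, LaurentPolynomial.invert_T, hco, hco, neg_neg,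
      evalNegOne_C_mul_T, evalNegOne_C_mul_T, zpow_neg, ← inv_zpow, inv_neg, inv_one]
    linear_combination c * coeff_neg_add_coeff_one_sub_xL_div_one_add_xL k

theorem coeff_zero_mul_toLaurentSeries_of_invert_eq {p : ℚ[T;T⁻¹]} (hp : invert p = p) :
    ((1 - xL) / (1 + xL) * toLaurentSeries p).coeff 0 = evalNegOne p := by
  have h := coeff_zero_mul_add_coeff_zero_mul_invert p
  rw [hp] at h
  linarith

/-- `CT_x ((1−x)/(1+x) · Δ) = 1 − t`, coefficientwise in `t`. -/
theorem stmt10 (Δ : PowerSeries (LaurentSeries ℚ)) (hΔ : IsDelta Δ) (n : ℕ) :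
    ((coeff (R := LaurentSeries ℚ) n) (C (R := LaurentSeries ℚ) ((1 - xL) / (1 + xL)) * Δ)).coeff 0
      = (coeff (R := ℚ) n) (1 - X) := by
  obtain ⟨D, hD1, hD2⟩ := exists_sq_eq_of_constantCoeff_eq_one
    (constantCoeff_deltaSq (1 + T 1 + T (-1) : ℚ[T;T⁻¹]))
  have hinv : map invert.toRingHom D = D :=
    map_eq_of_sq_eq_map_sq _ (isUnit_two_of_algebra_rat _) hD1 hD1
      (by rw [hD2, map_deltaSq]; exact congrArg deltaSq invert_trinomial.symm)
  have hev : map evalNegOne D = 1 - X :=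
    map_eq_of_sq_eq_map_sq _ (isUnit_two_of_algebra_rat _) hD1 (by simp)
      (by rw [hD2, map_deltaSq, evalNegOne_trinomial, deltaSq, map_neg, map_one]; ring)
  have hΔD : map toLaurentSeries D = Δ :=
    map_eq_of_sq_eq_map_sq _ (isUnit_two_of_algebra_rat _) hD1 hΔ.1
      (by rw [hΔ.2, hD2, map_deltaSq, toLaurentSeries_trinomial]; rfl)
  rw [coeff_C_mul, ← hΔD, coeff_map, coeff_zero_mul_toLaurentSeries_of_invert_eq, ← hev, coeff_map]
  simpa using congrArg (coeff n) hinv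
end

section
/- Define the Baxter numbers by b_n = (2/(n(n+1)²)) · Σ_{k=0}^{n−1} C(n+1,k)·C(n+1,k+1)·C(n+1,k+2) for n ≥ 1, with b_1 = 1, b_2 = 2. Then b_n satisfies the P-recurrence 8(n+1)(n+2)·b_{n+1} + (7n² + 49n + 82)·b_{n+2} − (n+5)(n+6)·b_{n+3} = 0 for all n ≥ 0 (with b_1 = 1, b_2 = 2, b_3 = 6). -/
open Nat

/-- The Baxter numbers `b_n = (2/(n(n+1)²)) Σ_{k=0}^{n-1} C(n+1,k) C(n+1,k+1) C(n+1,k+2)`. -/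
noncomputable def baxter (n : ℕ) : ℚ :=
  (2 / ((n : ℚ) * ((n : ℚ) + 1) ^ 2)) *
    ∑ k ∈ Finset.range n,
      ((n + 1).choose k * (n + 1).choose (k + 1) * (n + 1).choose (k + 2) : ℚ)

def P2q (n k : ℕ) : ℚ :=
  ((n:ℚ)+3)*(28*(n:ℚ)^2+178*(n:ℚ)+268)*(k:ℚ)
  + (42*(n:ℚ)^3+339*(n:ℚ)^2+873*(n:ℚ)+710)*(k:ℚ)^2
  + (14*(n:ℚ)^3+50*(n:ℚ)^2-58*(n:ℚ)-234)*(k:ℚ)^3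
  - (27*(n:ℚ)^2+111*(n:ℚ)+94)*(k:ℚ)^4
  + (18*(n:ℚ)+42)*(k:ℚ)^5 - 4*(k:ℚ)^6

def gq (n k : ℕ) : ℚ :=
  P2q n k * (((n+4).choose k : ℚ) * ((n+4).choose (k+1) : ℚ) * ((n+4).choose (k+2) : ℚ))

set_option maxHeartbeats 1600000 in
lemma keyk_le (k m : ℕ) :
    8*(((k+m:ℕ):ℚ)+3)^3*(((k+m:ℕ):ℚ)+4)^3 *
      (((k+m+2).choose k : ℚ) * ((k+m+2).choose (k+1) : ℚ) * ((k+m+2).choose (k+2) : ℚ))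
    + (7*(((k+m:ℕ):ℚ))^2+49*(((k+m:ℕ):ℚ))+82)*(((k+m:ℕ):ℚ)+3)*(((k+m:ℕ):ℚ)+4)^3 *
      (((k+m+3).choose k : ℚ) * ((k+m+3).choose (k+1) : ℚ) * ((k+m+3).choose (k+2) : ℚ))
    - (((k+m:ℕ):ℚ)+2)*(((k+m:ℕ):ℚ)+3)^2*(((k+m:ℕ):ℚ)+4)*(((k+m:ℕ):ℚ)+5)*(((k+m:ℕ):ℚ)+6) *
      (((k+m+4).choose k : ℚ) * ((k+m+4).choose (k+1) : ℚ) * ((k+m+4).choose (k+2) : ℚ))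
    = gq (k+m) (k+1) - gq (k+m) k := by
  have e1 : ((k+m+2).choose k : ℚ) = ((k+m+2)! : ℚ) / ((k ! : ℚ) * ((m+2)! : ℚ)) := by
    rw [Nat.cast_choose ℚ (by omega : k ≤ k+m+2), show k+m+2-k = m+2 by omega]
  have e2 : ((k+m+2).choose (k+1) : ℚ) = ((k+m+2)! : ℚ) / (((k+1)! : ℚ) * ((m+1)! : ℚ)) := by
    rw [Nat.cast_choose ℚ (by omega : k+1 ≤ k+m+2), show k+m+2-(k+1) = m+1 by omega]
  have e3 : ((k+m+2).choose (k+2) : ℚ) = ((k+m+2)! : ℚ) / (((k+2)! : ℚ) * ((m)! : ℚ)) := by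
    rw [Nat.cast_choose ℚ (by omega : k+2 ≤ k+m+2), show k+m+2-(k+2) = m by omega]
  have e4 : ((k+m+3).choose k : ℚ) = ((k+m+3)! : ℚ) / ((k ! : ℚ) * ((m+3)! : ℚ)) := by
    rw [Nat.cast_choose ℚ (by omega : k ≤ k+m+3), show k+m+3-k = m+3 by omega]
  have e5 : ((k+m+3).choose (k+1) : ℚ) = ((k+m+3)! : ℚ) / (((k+1)! : ℚ) * ((m+2)! : ℚ)) := by
    rw [Nat.cast_choose ℚ (by omega : k+1 ≤ k+m+3), show k+m+3-(k+1) = m+2 by omega]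
  have e6 : ((k+m+3).choose (k+2) : ℚ) = ((k+m+3)! : ℚ) / (((k+2)! : ℚ) * ((m+1)! : ℚ)) := by
    rw [Nat.cast_choose ℚ (by omega : k+2 ≤ k+m+3), show k+m+3-(k+2) = m+1 by omega]
  have e7 : ((k+m+4).choose k : ℚ) = ((k+m+4)! : ℚ) / ((k ! : ℚ) * ((m+4)! : ℚ)) := by
    rw [Nat.cast_choose ℚ (by omega : k ≤ k+m+4), show k+m+4-k = m+4 by omega]
  have e8 : ((k+m+4).choose (k+1) : ℚ) = ((k+m+4)! : ℚ) / (((k+1)! : ℚ) * ((m+3)! : ℚ)) := by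
    rw [Nat.cast_choose ℚ (by omega : k+1 ≤ k+m+4), show k+m+4-(k+1) = m+3 by omega]
  have e9 : ((k+m+4).choose (k+2) : ℚ) = ((k+m+4)! : ℚ) / (((k+2)! : ℚ) * ((m+2)! : ℚ)) := by
    rw [Nat.cast_choose ℚ (by omega : k+2 ≤ k+m+4), show k+m+4-(k+2) = m+2 by omega]
  have e10 : ((k+m+4).choose (k+3) : ℚ) = ((k+m+4)! : ℚ) / (((k+3)! : ℚ) * ((m+1)! : ℚ)) := by
    rw [Nat.cast_choose ℚ (by omega : k+3 ≤ k+m+4), show k+m+4-(k+3) = m+1 by omega]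
  have hk1 : ((k+1)! : ℚ) = ((k:ℚ)+1) * (k ! : ℚ) := by
    rw [Nat.factorial_succ]; push_cast; ring
  have hk2 : ((k+2)! : ℚ) = ((k:ℚ)+2)*((k:ℚ)+1) * (k ! : ℚ) := by
    rw [show k+2 = (k+1)+1 from rfl, Nat.factorial_succ, Nat.factorial_succ]; push_cast; ring
  have hk3 : ((k+3)! : ℚ) = ((k:ℚ)+3)*((k:ℚ)+2)*((k:ℚ)+1) * (k ! : ℚ) := by
    rw [show k+3 = (k+2)+1 from rfl, Nat.factorial_succ, show k+2 = (k+1)+1 from rfl,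
      Nat.factorial_succ, Nat.factorial_succ]; push_cast; ring
  have hm1 : ((m+1)! : ℚ) = ((m:ℚ)+1) * (m ! : ℚ) := by
    rw [Nat.factorial_succ]; push_cast; ring
  have hm2 : ((m+2)! : ℚ) = ((m:ℚ)+2)*((m:ℚ)+1) * (m ! : ℚ) := by
    rw [show m+2 = (m+1)+1 from rfl, Nat.factorial_succ, Nat.factorial_succ]; push_cast; ring
  have hm3 : ((m+3)! : ℚ) = ((m:ℚ)+3)*((m:ℚ)+2)*((m:ℚ)+1) * (m ! : ℚ) := by
    rw [show m+3 = (m+2)+1 from rfl, Nat.factorial_succ, show m+2 = (m+1)+1 from rfl,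
      Nat.factorial_succ, Nat.factorial_succ]; push_cast; ring
  have hm4 : ((m+4)! : ℚ) = ((m:ℚ)+4)*((m:ℚ)+3)*((m:ℚ)+2)*((m:ℚ)+1) * (m ! : ℚ) := by
    rw [show m+4 = (m+3)+1 from rfl, Nat.factorial_succ, show m+3 = (m+2)+1 from rfl,
      Nat.factorial_succ, show m+2 = (m+1)+1 from rfl, Nat.factorial_succ, Nat.factorial_succ]
    push_cast; ring
  have hn3 : ((k+m+3)! : ℚ) = ((k:ℚ)+(m:ℚ)+3) * ((k+m+2)! : ℚ) := by
    rw [show k+m+3 = (k+m+2)+1 from rfl, Nat.factorial_succ]; push_cast; ring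
  have hn4 : ((k+m+4)! : ℚ) = ((k:ℚ)+(m:ℚ)+4)*((k:ℚ)+(m:ℚ)+3) * ((k+m+2)! : ℚ) := by
    rw [show k+m+4 = (k+m+3)+1 from rfl, Nat.factorial_succ, show k+m+3 = (k+m+2)+1 from rfl,
      Nat.factorial_succ]; push_cast; ring
  have hK : (k ! : ℚ) ≠ 0 := Nat.cast_ne_zero.2 (Nat.factorial_ne_zero k)
  have hM : (m ! : ℚ) ≠ 0 := Nat.cast_ne_zero.2 (Nat.factorial_ne_zero m)
  have hN : (((k+m+2)!) : ℚ) ≠ 0 := Nat.cast_ne_zero.2 (Nat.factorial_ne_zero _)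
  have c1 : ((k:ℚ)+1) ≠ 0 := by positivity
  have c2 : ((k:ℚ)+2) ≠ 0 := by positivity
  have c3 : ((k:ℚ)+3) ≠ 0 := by positivity
  have d1 : ((m:ℚ)+1) ≠ 0 := by positivity
  have d2 : ((m:ℚ)+2) ≠ 0 := by positivity
  have d3 : ((m:ℚ)+3) ≠ 0 := by positivity
  have d4 : ((m:ℚ)+4) ≠ 0 := by positivity
  have q2 : ((k+m+3).choose k : ℚ) * ((k+m+3).choose (k+1) : ℚ) * ((k+m+3).choose (k+2) : ℚ)
      = (((k+m+2).choose k : ℚ) * ((k+m+2).choose (k+1) : ℚ) * ((k+m+2).choose (k+2) : ℚ))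
        * ((k:ℚ)+(m:ℚ)+3)^3 / (((m:ℚ)+1)*((m:ℚ)+2)*((m:ℚ)+3)) := by
    rw [e1, e2, e3, e4, e5, e6, hn3, hm3, hm2, hm1]
    field_simp
  have q3 : ((k+m+4).choose k : ℚ) * ((k+m+4).choose (k+1) : ℚ) * ((k+m+4).choose (k+2) : ℚ)
      = (((k+m+2).choose k : ℚ) * ((k+m+2).choose (k+1) : ℚ) * ((k+m+2).choose (k+2) : ℚ))
        * (((k:ℚ)+(m:ℚ)+3)^3 * ((k:ℚ)+(m:ℚ)+4)^3)
        / (((m:ℚ)+1)*((m:ℚ)+2)^2*((m:ℚ)+3)^2*((m:ℚ)+4)) := by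
    rw [e1, e2, e3, e7, e8, e9, hn4, hm4, hm3, hm2, hm1]
    field_simp
  have qR : ((k+m+4).choose (k+1) : ℚ) * ((k+m+4).choose (k+2) : ℚ) * ((k+m+4).choose (k+3) : ℚ)
      = (((k+m+2).choose k : ℚ) * ((k+m+2).choose (k+1) : ℚ) * ((k+m+2).choose (k+2) : ℚ))
        * (((k:ℚ)+(m:ℚ)+3)^3 * ((k:ℚ)+(m:ℚ)+4)^3)
        / (((k:ℚ)+1)*((k:ℚ)+2)*((k:ℚ)+3)*((m:ℚ)+1)*((m:ℚ)+2)*((m:ℚ)+3)) := by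
    rw [e1, e2, e3, e8, e9, e10, hn4, hm3, hm2, hm1, hk3, hk2, hk1]
    field_simp
  simp only [gq]
  rw [q2, q3, qR]
  simp only [P2q]
  push_cast
  field_simp
  ring

-- boundary case k = n+1
lemma keyk_b1 (n : ℕ) :
    8*((n:ℚ)+3)^3*((n:ℚ)+4)^3 *
      (((n+2).choose (n+1) : ℚ) * ((n+2).choose (n+1+1) : ℚ) * ((n+2).choose (n+1+2) : ℚ))
    + (7*(n:ℚ)^2+49*(n:ℚ)+82)*((n:ℚ)+3)*((n:ℚ)+4)^3 *
      (((n+3).choose (n+1) : ℚ) * ((n+3).choose (n+1+1) : ℚ) * ((n+3).choose (n+1+2) : ℚ))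
    - ((n:ℚ)+2)*((n:ℚ)+3)^2*((n:ℚ)+4)*((n:ℚ)+5)*((n:ℚ)+6) *
      (((n+4).choose (n+1) : ℚ) * ((n+4).choose (n+1+1) : ℚ) * ((n+4).choose (n+1+2) : ℚ))
    = gq n (n+1+1) - gq n (n+1) := by
  simp only [gq, show n+1+1 = n+2 from rfl, show n+1+2 = n+3 from rfl, show n+2+1 = n+3 from rfl,
    show n+2+2 = n+4 from rfl, show n+3+1 = n+4 from rfl]
  have z1 : ((n+2).choose (n+3) : ℚ) = 0 := by
    rw [Nat.choose_eq_zero_of_lt (by omega)]; norm_num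
  have o1 : ((n+2).choose (n+2) : ℚ) = 1 := by rw [Nat.choose_self]; norm_num
  have o2 : ((n+3).choose (n+3) : ℚ) = 1 := by rw [Nat.choose_self]; norm_num
  have o3 : ((n+4).choose (n+4) : ℚ) = 1 := by rw [Nat.choose_self]; norm_num
  have e1 : ((n+2).choose (n+1) : ℚ) = ((n+2)! : ℚ) / (((n+1)! : ℚ) * ((1)! : ℚ)) := by
    rw [Nat.cast_choose ℚ (by omega : n+1 ≤ n+2), show n+2-(n+1) = 1 by omega]
  have e2 : ((n+3).choose (n+1) : ℚ) = ((n+3)! : ℚ) / (((n+1)! : ℚ) * ((2)! : ℚ)) := by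
    rw [Nat.cast_choose ℚ (by omega : n+1 ≤ n+3), show n+3-(n+1) = 2 by omega]
  have e3 : ((n+3).choose (n+2) : ℚ) = ((n+3)! : ℚ) / (((n+2)! : ℚ) * ((1)! : ℚ)) := by
    rw [Nat.cast_choose ℚ (by omega : n+2 ≤ n+3), show n+3-(n+2) = 1 by omega]
  have e4 : ((n+4).choose (n+1) : ℚ) = ((n+4)! : ℚ) / (((n+1)! : ℚ) * ((3)! : ℚ)) := by
    rw [Nat.cast_choose ℚ (by omega : n+1 ≤ n+4), show n+4-(n+1) = 3 by omega]
  have e5 : ((n+4).choose (n+2) : ℚ) = ((n+4)! : ℚ) / (((n+2)! : ℚ) * ((2)! : ℚ)) := by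
    rw [Nat.cast_choose ℚ (by omega : n+2 ≤ n+4), show n+4-(n+2) = 2 by omega]
  have e6 : ((n+4).choose (n+3) : ℚ) = ((n+4)! : ℚ) / (((n+3)! : ℚ) * ((1)! : ℚ)) := by
    rw [Nat.cast_choose ℚ (by omega : n+3 ≤ n+4), show n+4-(n+3) = 1 by omega]
  have f2 : ((n+2)! : ℚ) = ((n:ℚ)+2) * ((n+1)! : ℚ) := by
    rw [show n+2 = (n+1)+1 from rfl, Nat.factorial_succ]; push_cast; ring
  have f3 : ((n+3)! : ℚ) = ((n:ℚ)+3)*((n:ℚ)+2) * ((n+1)! : ℚ) := by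
    rw [show n+3 = (n+2)+1 from rfl, Nat.factorial_succ, show n+2 = (n+1)+1 from rfl,
      Nat.factorial_succ]; push_cast; ring
  have f4 : ((n+4)! : ℚ) = ((n:ℚ)+4)*((n:ℚ)+3)*((n:ℚ)+2) * ((n+1)! : ℚ) := by
    rw [show n+4 = (n+3)+1 from rfl, Nat.factorial_succ, show n+3 = (n+2)+1 from rfl,
      Nat.factorial_succ, show n+2 = (n+1)+1 from rfl, Nat.factorial_succ]; push_cast; ring
  have hF : (((n+1)!) : ℚ) ≠ 0 := Nat.cast_ne_zero.2 (Nat.factorial_ne_zero _)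
  have s1 : ((1)! : ℚ) = 1 := by norm_num [Nat.factorial]
  have s2 : ((2)! : ℚ) = 2 := by norm_num [Nat.factorial]
  have s3 : ((3)! : ℚ) = 6 := by norm_num [Nat.factorial]
  rw [z1, o1, o2, o3, e1, e2, e3, e4, e5, e6, f4, f3, f2, s1, s2, s3]
  simp only [P2q]
  push_cast
  field_simp
  try ring

-- boundary case k = n+2
lemma keyk_b2 (n : ℕ) :
    8*((n:ℚ)+3)^3*((n:ℚ)+4)^3 *
      (((n+2).choose (n+2) : ℚ) * ((n+2).choose (n+2+1) : ℚ) * ((n+2).choose (n+2+2) : ℚ))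
    + (7*(n:ℚ)^2+49*(n:ℚ)+82)*((n:ℚ)+3)*((n:ℚ)+4)^3 *
      (((n+3).choose (n+2) : ℚ) * ((n+3).choose (n+2+1) : ℚ) * ((n+3).choose (n+2+2) : ℚ))
    - ((n:ℚ)+2)*((n:ℚ)+3)^2*((n:ℚ)+4)*((n:ℚ)+5)*((n:ℚ)+6) *
      (((n+4).choose (n+2) : ℚ) * ((n+4).choose (n+2+1) : ℚ) * ((n+4).choose (n+2+2) : ℚ))
    = gq n (n+2+1) - gq n (n+2) := by
  simp only [gq, show n+2+1 = n+3 from rfl, show n+2+2 = n+4 from rfl,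
    show n+3+1 = n+4 from rfl, show n+3+2 = n+5 from rfl, show n+4+1 = n+5 from rfl]
  have z1 : ((n+2).choose (n+3) : ℚ) = 0 := by
    rw [Nat.choose_eq_zero_of_lt (by omega)]; norm_num
  have z2 : ((n+3).choose (n+4) : ℚ) = 0 := by
    rw [Nat.choose_eq_zero_of_lt (by omega)]; norm_num
  have z3 : ((n+4).choose (n+5) : ℚ) = 0 := by
    rw [Nat.choose_eq_zero_of_lt (by omega)]; norm_num
  have o3 : ((n+4).choose (n+4) : ℚ) = 1 := by rw [Nat.choose_self]; norm_num
  have e5 : ((n+4).choose (n+2) : ℚ) = ((n+4)! : ℚ) / (((n+2)! : ℚ) * ((2)! : ℚ)) := by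
    rw [Nat.cast_choose ℚ (by omega : n+2 ≤ n+4), show n+4-(n+2) = 2 by omega]
  have e6 : ((n+4).choose (n+3) : ℚ) = ((n+4)! : ℚ) / (((n+3)! : ℚ) * ((1)! : ℚ)) := by
    rw [Nat.cast_choose ℚ (by omega : n+3 ≤ n+4), show n+4-(n+3) = 1 by omega]
  have f3 : ((n+3)! : ℚ) = ((n:ℚ)+3) * ((n+2)! : ℚ) := by
    rw [show n+3 = (n+2)+1 from rfl, Nat.factorial_succ]; push_cast; ring
  have f4 : ((n+4)! : ℚ) = ((n:ℚ)+4)*((n:ℚ)+3) * ((n+2)! : ℚ) := by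
    rw [show n+4 = (n+3)+1 from rfl, Nat.factorial_succ, show n+3 = (n+2)+1 from rfl,
      Nat.factorial_succ]; push_cast; ring
  have hF : (((n+2)!) : ℚ) ≠ 0 := Nat.cast_ne_zero.2 (Nat.factorial_ne_zero _)
  have s1 : ((1)! : ℚ) = 1 := by norm_num [Nat.factorial]
  have s2 : ((2)! : ℚ) = 2 := by norm_num [Nat.factorial]
  rw [z1, z2, z3, o3, e5, e6, f4, f3, s1, s2]
  simp only [P2q]
  push_cast
  field_simp
  try ring

-- case k ≥ n+3
lemma keyk_big (n k : ℕ) (h : n+3 ≤ k) :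
    8*((n:ℚ)+3)^3*((n:ℚ)+4)^3 *
      (((n+2).choose k : ℚ) * ((n+2).choose (k+1) : ℚ) * ((n+2).choose (k+2) : ℚ))
    + (7*(n:ℚ)^2+49*(n:ℚ)+82)*((n:ℚ)+3)*((n:ℚ)+4)^3 *
      (((n+3).choose k : ℚ) * ((n+3).choose (k+1) : ℚ) * ((n+3).choose (k+2) : ℚ))
    - ((n:ℚ)+2)*((n:ℚ)+3)^2*((n:ℚ)+4)*((n:ℚ)+5)*((n:ℚ)+6) *
      (((n+4).choose k : ℚ) * ((n+4).choose (k+1) : ℚ) * ((n+4).choose (k+2) : ℚ))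
    = gq n (k+1) - gq n k := by
  have z1 : (n+2).choose k = 0 := Nat.choose_eq_zero_of_lt (by omega)
  have z2 : (n+3).choose (k+1) = 0 := Nat.choose_eq_zero_of_lt (by omega)
  have z3 : (n+4).choose (k+2) = 0 := Nat.choose_eq_zero_of_lt (by omega)
  have z4 : (n+4).choose (k+1+2) = 0 := Nat.choose_eq_zero_of_lt (by omega)
  simp [gq, z1, z2, z3, z4]

lemma keyk (n k : ℕ) :
    8*((n:ℚ)+3)^3*((n:ℚ)+4)^3 *
      (((n+2).choose k : ℚ) * ((n+2).choose (k+1) : ℚ) * ((n+2).choose (k+2) : ℚ))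
    + (7*(n:ℚ)^2+49*(n:ℚ)+82)*((n:ℚ)+3)*((n:ℚ)+4)^3 *
      (((n+3).choose k : ℚ) * ((n+3).choose (k+1) : ℚ) * ((n+3).choose (k+2) : ℚ))
    - ((n:ℚ)+2)*((n:ℚ)+3)^2*((n:ℚ)+4)*((n:ℚ)+5)*((n:ℚ)+6) *
      (((n+4).choose k : ℚ) * ((n+4).choose (k+1) : ℚ) * ((n+4).choose (k+2) : ℚ))
    = gq n (k+1) - gq n k := by
  rcases le_or_gt k n with h | h
  · obtain ⟨m, rfl⟩ := le_iff_exists_add.mp h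
    exact keyk_le k m
  · rcases (by omega : k = n+1 ∨ k = n+2 ∨ n+3 ≤ k) with rfl | rfl | hk
    · exact keyk_b1 n
    · exact keyk_b2 n
    · exact keyk_big n k hk

lemma sum0 (n : ℕ) :
    8*((n:ℚ)+3)^3*((n:ℚ)+4)^3 *
      (∑ k ∈ Finset.range (n+1),
        (((n+2).choose k : ℚ) * ((n+2).choose (k+1) : ℚ) * ((n+2).choose (k+2) : ℚ)))
    + (7*(n:ℚ)^2+49*(n:ℚ)+82)*((n:ℚ)+3)*((n:ℚ)+4)^3 *
      (∑ k ∈ Finset.range (n+2),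
        (((n+3).choose k : ℚ) * ((n+3).choose (k+1) : ℚ) * ((n+3).choose (k+2) : ℚ)))
    - ((n:ℚ)+2)*((n:ℚ)+3)^2*((n:ℚ)+4)*((n:ℚ)+5)*((n:ℚ)+6) *
      (∑ k ∈ Finset.range (n+3),
        (((n+4).choose k : ℚ) * ((n+4).choose (k+1) : ℚ) * ((n+4).choose (k+2) : ℚ))) = 0 := by
  have H : ∑ k ∈ Finset.range (n+3),
      (8*((n:ℚ)+3)^3*((n:ℚ)+4)^3 *
        (((n+2).choose k : ℚ) * ((n+2).choose (k+1) : ℚ) * ((n+2).choose (k+2) : ℚ))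
      + (7*(n:ℚ)^2+49*(n:ℚ)+82)*((n:ℚ)+3)*((n:ℚ)+4)^3 *
        (((n+3).choose k : ℚ) * ((n+3).choose (k+1) : ℚ) * ((n+3).choose (k+2) : ℚ))
      - ((n:ℚ)+2)*((n:ℚ)+3)^2*((n:ℚ)+4)*((n:ℚ)+5)*((n:ℚ)+6) *
        (((n+4).choose k : ℚ) * ((n+4).choose (k+1) : ℚ) * ((n+4).choose (k+2) : ℚ)))
      = ∑ k ∈ Finset.range (n+3), (gq n (k+1) - gq n k) :=
    Finset.sum_congr rfl (fun k _ => keyk n k)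
  rw [Finset.sum_range_sub (fun k => gq n k)] at H
  rw [Finset.sum_sub_distrib, Finset.sum_add_distrib, ← Finset.mul_sum, ← Finset.mul_sum,
    ← Finset.mul_sum] at H
  have hg0 : gq n 0 = 0 := by norm_num [gq, P2q]
  have hgt : gq n (n+3) = 0 := by
    have hz : (n+4).choose (n+3+2) = 0 := Nat.choose_eq_zero_of_lt (by omega)
    simp [gq, hz]
  have ext1 : (∑ k ∈ Finset.range (n+1),
      (((n+2).choose k : ℚ) * ((n+2).choose (k+1) : ℚ) * ((n+2).choose (k+2) : ℚ)))
      = ∑ k ∈ Finset.range (n+3),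
      (((n+2).choose k : ℚ) * ((n+2).choose (k+1) : ℚ) * ((n+2).choose (k+2) : ℚ)) := by
    refine Finset.sum_subset (Finset.range_subset_range.2 (by omega)) (fun x hx hnx => ?_)
    simp only [Finset.mem_range] at hx hnx
    have hz : (n+2).choose (x+2) = 0 := Nat.choose_eq_zero_of_lt (by omega)
    simp [hz]
  have ext2 : (∑ k ∈ Finset.range (n+2),
      (((n+3).choose k : ℚ) * ((n+3).choose (k+1) : ℚ) * ((n+3).choose (k+2) : ℚ)))
      = ∑ k ∈ Finset.range (n+3),
      (((n+3).choose k : ℚ) * ((n+3).choose (k+1) : ℚ) * ((n+3).choose (k+2) : ℚ)) := by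
    refine Finset.sum_subset (Finset.range_subset_range.2 (by omega)) (fun x hx hnx => ?_)
    simp only [Finset.mem_range] at hx hnx
    have hz : (n+3).choose (x+2) = 0 := Nat.choose_eq_zero_of_lt (by omega)
    simp [hz]
  rw [ext1, ext2]
  rw [hg0, hgt] at H
  linarith [H]

theorem stmt14 :
    baxter 1 = 1 ∧ baxter 2 = 2 ∧ baxter 3 = 6 ∧
    ∀ n : ℕ, 8 * ((n : ℚ) + 1) * ((n : ℚ) + 2) * baxter (n + 1) +
        (7 * (n : ℚ) ^ 2 + 49 * (n : ℚ) + 82) * baxter (n + 2) -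
        ((n : ℚ) + 5) * ((n : ℚ) + 6) * baxter (n + 3) = 0 := by
  refine ⟨?_, ?_, ?_, ?_⟩
  · norm_num [baxter, Finset.sum_range_succ, Nat.choose]
  · norm_num [baxter, Finset.sum_range_succ, Nat.choose]
  · norm_num [baxter, Finset.sum_range_succ, Nat.choose]
  · intro n
    have H := sum0 n
    have c2 : ((n:ℚ)+2) ≠ 0 := by positivity
    have c3 : ((n:ℚ)+3) ≠ 0 := by positivity
    have c4 : ((n:ℚ)+4) ≠ 0 := by positivity
    have c5 : ((n:ℚ)+5) ≠ 0 := by positivity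
    have c6 : ((n:ℚ)+6) ≠ 0 := by positivity
    have hS3 : (∑ k ∈ Finset.range (n+3),
        (((n+4).choose k : ℚ) * ((n+4).choose (k+1) : ℚ) * ((n+4).choose (k+2) : ℚ)))
        = (8*((n:ℚ)+3)^3*((n:ℚ)+4)^3 *
            (∑ k ∈ Finset.range (n+1),
              (((n+2).choose k : ℚ) * ((n+2).choose (k+1) : ℚ) * ((n+2).choose (k+2) : ℚ)))
          + (7*(n:ℚ)^2+49*(n:ℚ)+82)*((n:ℚ)+3)*((n:ℚ)+4)^3 *
            (∑ k ∈ Finset.range (n+2),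
              (((n+3).choose k : ℚ) * ((n+3).choose (k+1) : ℚ) * ((n+3).choose (k+2) : ℚ))))
          / (((n:ℚ)+2)*((n:ℚ)+3)^2*((n:ℚ)+4)*((n:ℚ)+5)*((n:ℚ)+6)) := by
      rw [eq_div_iff (by positivity)]
      linarith [H]
    simp only [baxter]
    have i1 : n+1+1 = n+2 := rfl
    have i2 : n+2+1 = n+3 := rfl
    have i3 : n+3+1 = n+4 := rfl
    rw [i1, i2, i3, hS3]
    push_cast
    have c1 : ((n:ℚ)+1) ≠ 0 := by positivity
    field_simp
    ring
end
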